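/- Let ρ be a density operator on ℂ² ⊗ H of the form ρ = (1/2)(|0⟩⟨0| ⊗ σ₀ + |1⟩⟨1| ⊗ σ₁) where σ₀, σ₁ are density operators on H = H_M ⊗ H_N with tr_{H_N} σ₀ = tr_{H_N} σ₁. Then for any unitary W on ℂ² ⊗ A ⊗ H_M (acting trivially on H_N) applied to |0⟩⟨0|_S ⊗ ρ_aux ⊗ ρ (where the control register S is ℂ² and ρ_aux is any auxiliary state on A, with the first ℂ² of ρ relabeled appropriately), the probability that the XOR of the measurement outcomes of registers S and R equals 0 is exactly 1/2. -/
import Mathlib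


open scoped ComplexOrder
open Matrix

/-- Partial trace over the factor `N`. -/
noncomputable def ptraceN {M N : Type*} [Fintype N]
    (σ : Matrix (M × N) (M × N) ℂ) : Matrix M M ℂ :=
  fun m m' => ∑ n, σ (m, n) (m', n)

/-- The initial state `|0⟩⟨0|_S ⊗ ρ_aux ⊗ ρ` on registers `(S, A, R, M, N)`, where
`ρ = (1/2)(|0⟩⟨0|_R ⊗ σ₀ + |1⟩⟨1|_R ⊗ σ₁)`. -/
noncomputable def initState {A M N : Type*} [DecidableEq A] [DecidableEq M] [DecidableEq N]
    (σ₀ σ₁ : Matrix (M × N) (M × N) ℂ) (ρaux : Matrix A A ℂ) :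
    Matrix (Fin 2 × A × Fin 2 × M × N) (Fin 2 × A × Fin 2 × M × N) ℂ :=
  fun p q =>
    (if p.1 = 0 ∧ q.1 = 0 then 1 else 0) * ρaux p.2.1 q.2.1 * ((1 : ℂ)/2) *
      (if p.2.2.1 = q.2.2.1 then
        (if p.2.2.1 = 0 then σ₀ p.2.2.2 q.2.2.2 else σ₁ p.2.2.2 q.2.2.2)
       else 0)

/-- Extension of a unitary `W` on `S ⊗ A ⊗ M` to `(S, A, R, M, N)`, acting trivially
on the registers `R` and `N`. -/
noncomputable def Wext {A M N : Type*} [DecidableEq M] [DecidableEq N]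
    (W : Matrix (Fin 2 × A × M) (Fin 2 × A × M) ℂ) :
    Matrix (Fin 2 × A × Fin 2 × M × N) (Fin 2 × A × Fin 2 × M × N) ℂ :=
  fun p q =>
    W (p.1, p.2.1, p.2.2.2.1) (q.1, q.2.1, q.2.2.2.1) *
      (if p.2.2.1 = q.2.2.1 ∧ p.2.2.2.2 = q.2.2.2.2 then 1 else 0)

private lemma sum_swap4' {α β γ δ : Type*} [Fintype α] [Fintype β] [Fintype γ] [Fintype δ]
    (f : α → β → γ → δ → ℂ) :
    ∑ x, ∑ y, ∑ z, ∑ w, f x y z w = ∑ z, ∑ w, ∑ x, ∑ y, f x y z w :=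
  calc ∑ x, ∑ y, ∑ z, ∑ w, f x y z w
      = ∑ x, ∑ z, ∑ y, ∑ w, f x y z w := Finset.sum_congr rfl (fun _ _ => Finset.sum_comm)
    _ = ∑ z, ∑ x, ∑ y, ∑ w, f x y z w := Finset.sum_comm
    _ = ∑ z, ∑ x, ∑ w, ∑ y, f x y z w :=
        Finset.sum_congr rfl (fun _ _ => Finset.sum_congr rfl (fun _ _ => Finset.sum_comm))
    _ = ∑ z, ∑ w, ∑ x, ∑ y, f x y z w := Finset.sum_congr rfl (fun _ _ => Finset.sum_comm)

private lemma sum_rotate4 {α β γ δ : Type*} [Fintype α] [Fintype β] [Fintype γ] [Fintype δ]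
    (f : α → β → γ → δ → ℂ) :
    ∑ x, ∑ y, ∑ z, ∑ w, f x y z w = ∑ w, ∑ x, ∑ y, ∑ z, f x y z w :=
  calc ∑ x, ∑ y, ∑ z, ∑ w, f x y z w
      = ∑ x, ∑ y, ∑ w, ∑ z, f x y z w :=
        Finset.sum_congr rfl (fun _ _ => Finset.sum_congr rfl (fun _ _ => Finset.sum_comm))
    _ = ∑ x, ∑ w, ∑ y, ∑ z, f x y z w := Finset.sum_congr rfl (fun _ _ => Finset.sum_comm)
    _ = ∑ w, ∑ x, ∑ y, ∑ z, f x y z w := Finset.sum_comm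

set_option maxHeartbeats 1000000 in
private lemma entry_eq {A M N : Type} [Fintype A] [Fintype M] [Fintype N]
    [DecidableEq A] [DecidableEq M] [DecidableEq N]
    (σ₀ σ₁ : Matrix (M × N) (M × N) ℂ) (ρaux : Matrix A A ℂ)
    (W : Matrix (Fin 2 × A × M) (Fin 2 × A × M) ℂ)
    (s r : Fin 2) (a : A) (m : M) (n : N) :
    (Wext W * initState σ₀ σ₁ ρaux * (Wext W)ᴴ :
       Matrix (Fin 2 × A × Fin 2 × M × N) (Fin 2 × A × Fin 2 × M × N) ℂ)
        (s,a,r,m,n) (s,a,r,m,n)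
    = ((1:ℂ)/2) * ∑ q : (A × M) × (A × M),
        W (s,a,m) (0,q.1.1,q.1.2) *
          (ρaux q.1.1 q.2.1 *
            (if r = 0 then σ₀ (q.1.2,n) (q.2.2,n) else σ₁ (q.1.2,n) (q.2.2,n))) *
          (starRingEnd ℂ) (W (s,a,m) (0,q.2.1,q.2.2)) := by
  simp only [Matrix.mul_apply, Matrix.conjTranspose_apply, Finset.sum_mul, Wext, initState,
    Fintype.sum_prod_type, star_mul', apply_ite (star (R := ℂ)), star_one, star_zero,
    mul_ite, ite_mul, mul_one, one_mul, mul_zero, zero_mul, ite_and,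
    Finset.sum_ite_eq, Finset.sum_ite_eq', Finset.mem_univ, if_true,
    Finset.sum_ite_irrel, Finset.sum_const_zero]
  split_ifs
  all_goals
    rw [show ∀ (σ : Matrix (M × N) (M × N) ℂ),
        (∑ x : A, ∑ x1 : M, ∑ x2 : A, ∑ x3 : M,
          W (s, a, m) (0, x2, x3) * (ρaux x2 x * (1/2) * σ (x3, n) (x1, n)) *
            star (W (s, a, m) (0, x, x1)))
        = ∑ x2 : A, ∑ x3 : M, ∑ x : A, ∑ x1 : M,
          W (s, a, m) (0, x2, x3) * (ρaux x2 x * (1/2) * σ (x3, n) (x1, n)) *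
            star (W (s, a, m) (0, x, x1)) from fun σ => sum_swap4' _]
    simp only [Finset.mul_sum]
    refine Finset.sum_congr rfl fun _ _ => Finset.sum_congr rfl fun _ _ =>
      Finset.sum_congr rfl fun _ _ => Finset.sum_congr rfl fun _ _ => ?_
    simp only [starRingEnd_apply]
    ring


set_option maxHeartbeats 1000000

/-- Key step of the quantum rewinding argument: if the coin register `R` is uniform
and its two branches `σ₀, σ₁` have equal reduced states on `M` (`tr_N σ₀ = tr_N σ₁`),
then for any unitary `W` on `S ⊗ A ⊗ M` (acting trivially on `N` and `R`) applied to
`|0⟩⟨0|_S ⊗ ρ_aux ⊗ ρ`, the probability that the measurement outcomes of `S` and `R`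
XOR to `0` (i.e. agree) is exactly `1/2`, regardless of the auxiliary state. -/
theorem rewinding_success_probability_half {A M N : Type} [Fintype A] [Fintype M] [Fintype N]
    [DecidableEq A] [DecidableEq M] [DecidableEq N]
    (σ₀ σ₁ : Matrix (M × N) (M × N) ℂ)
    (h₀ : σ₀.PosSemidef) (h₁ : σ₁.PosSemidef)
    (ht₀ : σ₀.trace = 1) (ht₁ : σ₁.trace = 1)
    (heq : ptraceN σ₀ = ptraceN σ₁)
    (ρaux : Matrix A A ℂ) (ha : ρaux.PosSemidef) (hat : ρaux.trace = 1)
    (W : Matrix (Fin 2 × A × M) (Fin 2 × A × M) ℂ)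
    (hW : W ∈ Matrix.unitaryGroup (Fin 2 × A × M) ℂ) :
    (∑ p : Fin 2 × A × Fin 2 × M × N,
        if p.1 = p.2.2.1 then
          ((Wext W * initState σ₀ σ₁ ρaux * (Wext W)ᴴ :
            Matrix (Fin 2 × A × Fin 2 × M × N) (Fin 2 × A × Fin 2 × M × N) ℂ) p p)
        else 0).re
      = 1/2 := by
  classical
  -- unitarity in nested-sum form
  have key : ∀ x y : Fin 2 × A × M,
      (∑ s : Fin 2, ∑ a : A, ∑ m : M, (starRingEnd ℂ) (W (s,a,m) x) * W (s,a,m) y)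
        = if x = y then 1 else 0 := by
    intro x y
    have h2 := congrFun (congrFun hW.1 x) y
    simpa [Matrix.mul_apply, Matrix.conjTranspose_apply, Matrix.one_apply,
      Fintype.sum_prod_type] using h2
  have hτtr : (∑ k : M, ptraceN σ₀ k k) = 1 := by
    simpa [ptraceN, Matrix.trace, Matrix.diag, Fintype.sum_prod_type] using ht₀
  have hatr : (∑ b : A, ρaux b b) = 1 := by
    simpa [Matrix.trace, Matrix.diag] using hat
  have hτ1 : ∀ k k' : M, (∑ n, σ₁ (k, n) (k', n)) = ptraceN σ₀ k k' := by
    intro k k'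
    have := congrFun (congrFun heq.symm k) k'
    simpa [ptraceN] using this
  have hstep : ∀ (s : Fin 2) (a : A) (m : M),
      (∑ n, (Wext W * initState σ₀ σ₁ ρaux * (Wext W)ᴴ :
          Matrix (Fin 2 × A × Fin 2 × M × N) (Fin 2 × A × Fin 2 × M × N) ℂ)
          (s,a,s,m,n) (s,a,s,m,n))
      = ((1:ℂ)/2) * ∑ q : (A × M) × (A × M),
          W (s,a,m) (0,q.1.1,q.1.2) * (ρaux q.1.1 q.2.1 * ptraceN σ₀ q.1.2 q.2.2) *
            (starRingEnd ℂ) (W (s,a,m) (0,q.2.1,q.2.2)) := by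
    intro s a m
    simp only [entry_eq σ₀ σ₁ ρaux W s s a m]
    rw [← Finset.mul_sum]
    congr 1
    rw [Finset.sum_comm]
    refine Finset.sum_congr rfl fun q _ => ?_
    rw [← Finset.sum_mul, ← Finset.mul_sum, ← Finset.mul_sum]
    have hn : (∑ n, (if s = 0 then σ₀ (q.1.2,n) (q.2.2,n) else σ₁ (q.1.2,n) (q.2.2,n)))
        = ptraceN σ₀ q.1.2 q.2.2 := by
      split_ifs
      · rfl
      · exact hτ1 _ _
    rw [hn]
  have hmain : (∑ p : Fin 2 × A × Fin 2 × M × N,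
        if p.1 = p.2.2.1 then
          ((Wext W * initState σ₀ σ₁ ρaux * (Wext W)ᴴ :
            Matrix (Fin 2 × A × Fin 2 × M × N) (Fin 2 × A × Fin 2 × M × N) ℂ) p p)
        else 0) = (1:ℂ)/2 := by
    simp only [Fintype.sum_prod_type]
    rw [show ∀ (G : Fin 2 → A → Fin 2 → M → N → ℂ),
        (∑ x : Fin 2, ∑ x1 : A, ∑ x2 : Fin 2, ∑ x3 : M, ∑ y : N,
          if x = x2 then G x x1 x2 x3 y else 0)
        = ∑ x : Fin 2, ∑ x1 : A, ∑ x3 : M, ∑ y : N, G x x1 x x3 y from fun G => by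
        simp only [Finset.sum_ite_irrel, Finset.sum_const_zero, Finset.sum_ite_eq,
          Finset.mem_univ, if_true]]
    simp only [hstep, ← Finset.mul_sum]
    rw [show (∑ s : Fin 2, ∑ a : A, ∑ m : M, ∑ q : (A × M) × (A × M),
        W (s,a,m) (0,q.1.1,q.1.2) * (ρaux q.1.1 q.2.1 * ptraceN σ₀ q.1.2 q.2.2) *
          (starRingEnd ℂ) (W (s,a,m) (0,q.2.1,q.2.2)))
      = ∑ q : (A × M) × (A × M), ∑ s : Fin 2, ∑ a : A, ∑ m : M,
        W (s,a,m) (0,q.1.1,q.1.2) * (ρaux q.1.1 q.2.1 * ptraceN σ₀ q.1.2 q.2.2) *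
          (starRingEnd ℂ) (W (s,a,m) (0,q.2.1,q.2.2)) from sum_rotate4 _]
    have hq : ∀ q : (A × M) × (A × M),
        (∑ s : Fin 2, ∑ a : A, ∑ m : M,
          W (s,a,m) (0,q.1.1,q.1.2) * (ρaux q.1.1 q.2.1 * ptraceN σ₀ q.1.2 q.2.2) *
            (starRingEnd ℂ) (W (s,a,m) (0,q.2.1,q.2.2)))
        = (ρaux q.1.1 q.2.1 * ptraceN σ₀ q.1.2 q.2.2) *
            (if ((0 : Fin 2),q.2.1,q.2.2) = ((0 : Fin 2),q.1.1,q.1.2) then 1 else 0) := by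
      intro q
      rw [← key ((0 : Fin 2),q.2.1,q.2.2) ((0 : Fin 2),q.1.1,q.1.2)]
      simp only [Finset.mul_sum]
      refine Finset.sum_congr rfl fun _ _ => Finset.sum_congr rfl fun _ _ =>
        Finset.sum_congr rfl fun _ _ => ?_
      simp only [starRingEnd_apply]
      ring
    simp only [hq]
    simp only [Prod.mk.injEq, true_and, Fintype.sum_prod_type, mul_ite, mul_one, mul_zero,
      ite_and, Finset.sum_ite_irrel, Finset.sum_const_zero, Finset.sum_ite_eq,
      Finset.sum_ite_eq', Finset.mem_univ, if_true]
    rw [show (∑ b : A, ∑ k : M, ρaux b b * ptraceN σ₀ k k)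
        = (∑ b : A, ρaux b b) * (∑ k : M, ptraceN σ₀ k k) by
      rw [Finset.sum_mul]
      exact Finset.sum_congr rfl fun _ _ => (Finset.mul_sum _ _ _).symm]
    rw [hatr, hτtr]
    ring
  rw [hmain]
  norm_num
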